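/- arXiv:2505.08185 — 3 statements merged into one kernel-verified Lean document; each statement's English description precedes it below -/
import Mathlib

section
/- Let G be a finite 3-connected simple graph and let S be a 3-cut of G. Suppose G − S consists of exactly three components C₁, C₂, C₃. Let F₁ be a c₁–S fan in G[V(C₁) ∪ S] where c₁ ∈ C₁. If (V(C₁) ∪ S) − V(F₁) ≠ ∅, then G contains at least two contractible non-edges. -/
/-!
Pick `x ∈ C₁` outside the fan and `cᵢ ∈ Cᵢ` for `i = 2, 3`. Deleting `x`, `cᵢ` and any third
vertex `w` leaves `G` connected: the surviving vertices of `S` are joined through the fan when `w`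
lies in the third component, and through that component otherwise, while every other vertex
reaches `S` inside its own component `C`, which loses at most two vertices of `C ∪ S`. So no
3-cut contains both `x` and `cᵢ`, hence contracting the non-edge `{x, cᵢ}` leaves `G`
3-connected, and `{x, c₂}`, `{x, c₃}` are two contractible non-edges.
-/

open SimpleGraph

variable {V : Type*}

/-- A graph is `k`-connected: it has at least `k+1` vertices, and removing any set of
fewer than `k` vertices leaves a connected graph. -/
def KConnected (k : ℕ) (G : SimpleGraph V) : Prop :=
  k + 1 ≤ Nat.card V ∧ ∀ S : Set V, S.ncard < k → (G.induce Sᶜ).Connected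

/-- Contraction of the non-edge `{u, v}`: `u` and `v` are replaced by a single
vertex (represented here by `u`), adjacent to every vertex that was adjacent to
`u` or to `v`. -/
def contractNonEdge (G : SimpleGraph V) (u v : V) : SimpleGraph {w : V // w ≠ v} where
  Adj a b := a ≠ b ∧ (G.Adj a.1 b.1 ∨ (a.1 = u ∧ G.Adj v b.1) ∨ (b.1 = u ∧ G.Adj a.1 v))
  symm := by
    constructor
    rintro a b ⟨hab, h | ⟨h1, h2⟩ | ⟨h1, h2⟩⟩
    · exact ⟨hab.symm, Or.inl h.symm⟩
    · exact ⟨hab.symm, Or.inr (Or.inr ⟨h1, h2.symm⟩)⟩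
    · exact ⟨hab.symm, Or.inr (Or.inl ⟨h1, h2.symm⟩)⟩
  loopless := ⟨fun a h => h.1 rfl⟩

/-- `{u, v}` is a contractible non-edge of `G`: a non-edge whose contraction yields
a `3`-connected graph. -/
def IsContractibleNonEdge (G : SimpleGraph V) (u v : V) : Prop :=
  u ≠ v ∧ ¬ G.Adj u v ∧ KConnected 3 (contractNonEdge G u v)

/-- The set of contractible non-edges of `G`, as unordered pairs of vertices. -/
def contractibleNonEdges (G : SimpleGraph V) : Set (Sym2 V) :=
  {p | ∃ u v : V, p = s(u, v) ∧ IsContractibleNonEdge G u v}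

/-- `S` is a cut of `G`: deleting the vertices of `S` leaves a disconnected graph. -/
def IsCutSet (G : SimpleGraph V) (S : Set V) : Prop :=
  ¬ (G.induce Sᶜ).Preconnected

/-- `C` is the vertex set of a (connected) component of `G − S`. -/
def IsCompOf (G : SimpleGraph V) (S : Set V) (C : Set V) : Prop :=
  C.Nonempty ∧ C ⊆ Sᶜ ∧ (G.induce C).Connected ∧
    ∀ x ∈ C, ∀ y, y ∉ S → G.Adj x y → y ∈ C

/-- A `c`–`S` fan for a three-element set `S = {s1, s2, s3}` inside the induced
subgraph `G[A]`: three paths of `G` from `c ∉ S` to the three (distinct) vertices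
of `S`, pairwise sharing only the vertex `c`, each meeting `S` only in its final
endpoint, and with all their vertices inside `A`. -/
structure Fan3 (G : SimpleGraph V) (A : Set V) (c : V) (S : Set V) where
  s1 : V
  s2 : V
  s3 : V
  hS : S = {s1, s2, s3}
  h12 : s1 ≠ s2
  h13 : s1 ≠ s3
  h23 : s2 ≠ s3
  hc : c ∉ S
  p1 : G.Walk c s1
  p2 : G.Walk c s2
  p3 : G.Walk c s3
  hp1 : p1.IsPath
  hp2 : p2.IsPath
  hp3 : p3.IsPath
  hA1 : ∀ x ∈ p1.support, x ∈ A
  hA2 : ∀ x ∈ p2.support, x ∈ A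
  hA3 : ∀ x ∈ p3.support, x ∈ A
  hS1 : ∀ x ∈ p1.support, x ∈ S → x = s1
  hS2 : ∀ x ∈ p2.support, x ∈ S → x = s2
  hS3 : ∀ x ∈ p3.support, x ∈ S → x = s3
  hI12 : ∀ x ∈ p1.support, x ∈ p2.support → x = c
  hI13 : ∀ x ∈ p1.support, x ∈ p3.support → x = c
  hI23 : ∀ x ∈ p2.support, x ∈ p3.support → x = c

/-- The vertex set of a fan. -/
def Fan3.verts {G : SimpleGraph V} {A : Set V} {c : V} {S : Set V}
    (F : Fan3 G A c S) : Set V :=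
  {x | x ∈ F.p1.support ∨ x ∈ F.p2.support ∨ x ∈ F.p3.support}

/-- The order of a fan is its number of vertices. -/
noncomputable def Fan3.order {G : SimpleGraph V} {A : Set V} {c : V} {S : Set V}
    (F : Fan3 G A c S) : ℕ :=
  F.verts.ncard

open Set Function

section InducedSubgraphs

variable {W : Type*} {G : SimpleGraph V} {G' : SimpleGraph W}

theorem exists_walk_of_reachable_induce {A : Set V} {a b : A}
    (h : (G.induce A).Reachable a b) : ∃ p : G.Walk a b, ∀ v ∈ p.support, v ∈ A := by
  obtain ⟨p⟩ := h
  let q := p.map (Embedding.induce A).toHom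
  have hq : ∀ v ∈ q.support, v ∈ A := by
    intro v hv
    rw [Walk.support_map, List.mem_map] at hv
    obtain ⟨w, -, rfl⟩ := hv
    exact w.2
  exact ⟨q, hq⟩

theorem preconnected_induce_of_forall_reachable {U R : Set V} (hRU : R ⊆ U)
    (hR : (G.induce R).Preconnected)
    (h : ∀ y (hy : y ∈ U), ∃ b, ∃ hb : b ∈ R, (G.induce U).Reachable ⟨y, hy⟩ ⟨b, hRU hb⟩) :
    (G.induce U).Preconnected := by
  rintro ⟨y, hy⟩ ⟨y', hy'⟩
  obtain ⟨b, hb, hyb⟩ := h y hy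
  obtain ⟨b', hb', hyb'⟩ := h y' hy'
  exact hyb.trans (((hR ⟨b, hb⟩ ⟨b', hb'⟩).map (G.induceHomOfLE hRU).toHom).trans hyb'.symm)

theorem connected_induce_of_connected_induce_preimage (φ : G →g G') (hφ : Surjective φ)
    {t : Set W} (h : (G.induce (φ ⁻¹' t)).Connected) : (G'.induce t).Connected :=
  h.map (induceHom φ (mapsTo_preimage φ t)) (t.restrictPreimage_surjective hφ)

end InducedSubgraphs

theorem KConnected.finite {k : ℕ} {G : SimpleGraph V} (hG : KConnected k G) : Finite V :=
  Nat.finite_of_card_ne_zero (by have := hG.1; omega)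

theorem exists_eq_pair_of_mem_of_ncard_lt_three {α : Type*} [Finite α] {s : Set α} {a : α}
    (ha : a ∈ s) (hs : s.ncard < 3) : ∃ b, s = {a, b} := by
  have hdiff : (s \ {a}).ncard ≤ 1 := by
    have := ncard_sdiff_singleton_add_one ha
    omega
  obtain h | ⟨b, hb⟩ := (ncard_le_one_iff_eq (toFinite _)).1 hdiff
  · refine ⟨a, ?_⟩
    rw [pair_eq_singleton]
    exact (sdiff_eq_empty.1 h).antisymm (singleton_subset_iff.2 ha)
  · exact ⟨b, by rw [← hb, insert_sdiff_singleton, insert_eq_of_mem ha]⟩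

namespace IsCompOf

variable {G : SimpleGraph V} {S C D : Set V}

theorem mem_of_walk (hC : IsCompOf G S C) {a b : V} (p : G.Walk a b)
    (hp : ∀ v ∈ p.support, v ∉ S) (ha : a ∈ C) : b ∈ C := by
  induction p with
  | nil => exact ha
  | cons h p ih =>
    simp only [Walk.support_cons, List.mem_cons, forall_eq_or_imp] at hp
    exact ih hp.2 (hC.2.2.2 _ ha _ (hp.2 _ p.start_mem_support) h)

theorem subset_of_mem (hC : IsCompOf G S C) (hD : IsCompOf G S D) {x : V} (hxC : x ∈ C)
    (hxD : x ∈ D) : C ⊆ D := fun y hy => by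
  obtain ⟨p, hp⟩ := exists_walk_of_reachable_induce (hC.2.2.1.preconnected ⟨x, hxC⟩ ⟨y, hy⟩)
  exact hD.mem_of_walk p (fun v hv => hC.2.1 (hp v hv)) hxD

theorem eq_of_mem (hC : IsCompOf G S C) (hD : IsCompOf G S D) {x : V} (hxC : x ∈ C)
    (hxD : x ∈ D) : C = D :=
  (hC.subset_of_mem hD hxC hxD).antisymm (hD.subset_of_mem hC hxD hxC)

theorem notMem_of_ne (hC : IsCompOf G S C) (hD : IsCompOf G S D) (hCD : C ≠ D) {x : V}
    (hx : x ∈ C) : x ∉ D :=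
  fun hxD => hCD (hC.eq_of_mem hD hx hxD)

theorem notMem_union_of_ne (hC : IsCompOf G S C) (hD : IsCompOf G S D) (hCD : C ≠ D) {x : V}
    (hx : x ∈ C) : x ∉ D ∪ S := by
  rintro (hxD | hxS)
  exacts [hC.notMem_of_ne hD hCD hx hxD, hC.2.1 hx hxS]

/-- `x` and `c` do not both lie in `C ∪ S`. -/
theorem ncard_inter_union_lt_three (hC : IsCompOf G S C) (hD : IsCompOf G S D) {x c : V}
    (hx : x ∈ D) (hc : c ∉ D ∪ S) (w : V) : ({x, c, w} ∩ (C ∪ S)).ncard < 3 := by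
  have hpair : ∀ a, ({a, w} : Set V).ncard < 3 := fun a =>
    (ncard_insert_le a {w}).trans_lt (by rw [ncard_singleton]; norm_num)
  by_cases hxC : x ∈ C
  · obtain rfl := hD.eq_of_mem hC hx hxC
    refine (ncard_le_ncard ?_).trans_lt (hpair x)
    rintro v ⟨rfl | rfl | rfl, hv⟩
    exacts [Or.inl rfl, absurd hv hc, Or.inr rfl]
  · refine (ncard_le_ncard ?_).trans_lt (hpair c)
    rintro v ⟨rfl | rfl | rfl, hv⟩
    exacts [absurd hv (by rintro (h | h); exacts [hxC h, hD.2.1 hx h]), Or.inl rfl, Or.inr rfl]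

/-- A walk from `C` leaves `C` only through `S`, so its part up to its first vertex in `S` lies
in `C ∪ S`. -/
theorem exists_reachable_of_walk (hC : IsCompOf G S C) {A : Set V} {y s : V}
    (p : G.Walk y s) (hp : ∀ v ∈ p.support, v ∈ C ∪ S → v ∈ A) (hy : y ∈ C) (hs : s ∈ S)
    (hyA : y ∈ A) : ∃ b ∈ S, ∃ hb : b ∈ A, (G.induce A).Reachable ⟨y, hyA⟩ ⟨b, hb⟩ := by
  induction p with
  | nil => exact absurd hs (hC.2.1 hy)
  | @cons y z s h p ih =>
    simp only [Walk.support_cons, List.mem_cons, forall_eq_or_imp] at hp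
    by_cases hz : z ∈ S
    · exact ⟨z, hz, hp.2 z p.start_mem_support (Or.inr hz), (induce_adj.2 h).reachable⟩
    · have hzC : z ∈ C := hC.2.2.2 y hy z hz h
      obtain ⟨b, hbS, hbA, hzb⟩ := ih hp.2 hzC hs (hp.2 z p.start_mem_support (Or.inl hzC))
      exact ⟨b, hbS, hbA, (induce_adj.2 h).reachable.trans hzb⟩

theorem exists_reachable_of_kConnected (hG : KConnected 3 G) (hC : IsCompOf G S C)
    {T : Set V} (hT : (T ∩ (C ∪ S)).ncard < 3) {s y : V} (hs : s ∈ S) (hsT : s ∈ Tᶜ)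
    (hy : y ∈ C) (hyT : y ∈ Tᶜ) :
    ∃ b ∈ S, ∃ hb : b ∈ Tᶜ, (G.induce Tᶜ).Reachable ⟨y, hyT⟩ ⟨b, hb⟩ := by
  obtain ⟨p, hp⟩ := exists_walk_of_reachable_induce
    ((hG.2 _ hT).preconnected ⟨y, fun h => hyT h.1⟩ ⟨s, fun h => hsT h.1⟩)
  exact hC.exists_reachable_of_walk p (fun v hv hvCS hvT => hp v hv ⟨hvT, hvCS⟩) hy hs hyT

theorem reachable_insert_of_mem (hG : KConnected 3 G) (hS : S.ncard ≤ 3)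
    (hC : IsCompOf G S C) {s y : V} (hs : s ∈ S) (hy : y ∈ C) :
    (G.induce (insert s C)).Reachable ⟨y, Or.inr hy⟩ ⟨s, Or.inl rfl⟩ := by
  have := hG.finite
  have hlt : (S \ {s}).ncard < 3 := (ncard_sdiff_singleton_lt_of_mem hs).trans_le hS
  obtain ⟨p, hp⟩ := exists_walk_of_reachable_induce
    ((hG.2 _ hlt).preconnected ⟨y, fun h => hC.2.1 hy h.1⟩ ⟨s, fun h => h.2 rfl⟩)
  have hpA : ∀ v ∈ p.support, v ∈ C ∪ S → v ∈ insert s C := by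
    rintro v hv (hvC | hvS)
    · exact Or.inr hvC
    · exact Or.inl (of_not_not fun hne => hp v hv ⟨hvS, hne⟩)
  obtain ⟨b, hbS, hb, hyb⟩ := hC.exists_reachable_of_walk p hpA hy hs (Or.inr hy)
  obtain rfl : b = s := hb.resolve_right fun hbC => hC.2.1 hbC hbS
  exact hyb

theorem connected_induce_union (hG : KConnected 3 G) (hS : S.ncard ≤ 3)
    (hC : IsCompOf G S C) {S' : Set V} (hS' : S' ⊆ S) : (G.induce (C ∪ S')).Connected := by
  obtain ⟨y, hy⟩ := hC.1
  refine induce_connected_of_patches y (Or.inl hy) fun {v} hv => ?_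
  rcases hv with hvC | hvS
  · exact ⟨C, subset_union_left, hy, hvC, hC.2.2.1.preconnected _ _⟩
  · exact ⟨insert v C, insert_subset (Or.inr hvS) subset_union_left, Or.inr hy, Or.inl rfl,
      hC.reachable_insert_of_mem hG hS (hS' hvS) hy⟩

end IsCompOf

namespace Fan3

variable {G : SimpleGraph V} {A : Set V} {c : V} {S : Set V} (F : Fan3 G A c S)

theorem verts_subset : F.verts ⊆ A := by
  rintro v (h | h | h)
  exacts [F.hA1 v h, F.hA2 v h, F.hA3 v h]

theorem subset_verts : S ⊆ F.verts := by
  intro v hv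
  rw [F.hS] at hv
  rcases hv with rfl | rfl | rfl
  exacts [Or.inl F.p1.end_mem_support, Or.inr (Or.inl F.p2.end_mem_support),
    Or.inr (Or.inr F.p3.end_mem_support)]

theorem connected_induce_verts : (G.induce F.verts).Connected := by
  change (G.induce ({v | v ∈ F.p1.support} ∪
    ({v | v ∈ F.p2.support} ∪ {v | v ∈ F.p3.support}))).Connected
  have h23 := induce_union_connected F.p2.connected_induce_support.preconnected
    F.p3.connected_induce_support.preconnected ⟨c, F.p2.start_mem_support, F.p3.start_mem_support⟩
  exact induce_union_connected F.p1.connected_induce_support.preconnected h23.preconnected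
    ⟨c, F.p1.start_mem_support, Or.inl F.p2.start_mem_support⟩

end Fan3

section Contraction

variable {G : SimpleGraph V} {u v : V}

open scoped Classical in
noncomputable def contractNonEdgeProj (huv : u ≠ v) (y : V) : {w : V // w ≠ v} :=
  if h : y = v then ⟨u, huv⟩ else ⟨y, h⟩

theorem contractNonEdgeProj_self (huv : u ≠ v) : contractNonEdgeProj huv v = ⟨u, huv⟩ :=
  dif_pos rfl

theorem contractNonEdgeProj_of_ne (huv : u ≠ v) {y : V} (hy : y ≠ v) :
    contractNonEdgeProj huv y = ⟨y, hy⟩ :=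
  dif_neg hy

theorem contractNonEdgeProj_surjective (huv : u ≠ v) : Surjective (contractNonEdgeProj huv) :=
  fun a => ⟨a.1, contractNonEdgeProj_of_ne huv a.2⟩

theorem contractNonEdgeProj_preimage_pair (huv : u ≠ v) (t : {w : V // w ≠ v}) :
    contractNonEdgeProj huv ⁻¹' {⟨u, huv⟩, t} = {u, v, t.1} := by
  ext y
  rcases eq_or_ne y v with rfl | hy
  · simp [contractNonEdgeProj_self]
  · simp [contractNonEdgeProj_of_ne huv hy, Subtype.ext_iff, hy]

theorem contractNonEdgeProj_preimage_of_notMem (huv : u ≠ v) {T : Set {w : V // w ≠ v}}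
    (hT : ⟨u, huv⟩ ∉ T) : contractNonEdgeProj huv ⁻¹' T = Subtype.val '' T := by
  ext y
  rcases eq_or_ne y v with rfl | hy
  · simp [contractNonEdgeProj_self, hT]
  · simp [contractNonEdgeProj_of_ne huv hy, hy]

/-- No edge of `G` is collapsed, since `u` and `v` are not adjacent. -/
noncomputable def contractNonEdgeHom (huv : u ≠ v) (hnadj : ¬ G.Adj u v) :
    G →g contractNonEdge G u v where
  toFun := contractNonEdgeProj huv
  map_rel' {a b} hab := by
    rcases eq_or_ne a v with rfl | ha
    · have hbu : b ≠ u := by rintro rfl; exact hnadj hab.symm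
      rw [contractNonEdgeProj_self, contractNonEdgeProj_of_ne huv hab.ne.symm]
      exact ⟨fun h => hbu (congrArg Subtype.val h).symm, Or.inr (Or.inl ⟨rfl, hab⟩)⟩
    rcases eq_or_ne b v with rfl | hb
    · have hau : a ≠ u := by rintro rfl; exact hnadj hab
      rw [contractNonEdgeProj_self, contractNonEdgeProj_of_ne huv ha]
      exact ⟨fun h => hau (congrArg Subtype.val h), Or.inr (Or.inr ⟨rfl, hab⟩)⟩
    rw [contractNonEdgeProj_of_ne huv ha, contractNonEdgeProj_of_ne huv hb]
    exact ⟨fun h => hab.ne (congrArg Subtype.val h), Or.inl hab⟩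

theorem kConnected_contractNonEdge (hG : KConnected 3 G) (huv : u ≠ v) (hnadj : ¬ G.Adj u v)
    (hcard : 5 ≤ Nat.card V) (h : ∀ w, (G.induce {u, v, w}ᶜ).Connected) :
    KConnected 3 (contractNonEdge G u v) := by
  have := hG.finite
  refine ⟨?_, fun T hT => ?_⟩
  · have := ncard_add_ncard_compl ({v} : Set V)
    rw [ncard_singleton] at this
    change 4 ≤ Nat.card ({v}ᶜ : Set V)
    rw [Nat.card_coe_set_eq]
    omega
  refine connected_induce_of_connected_induce_preimage (contractNonEdgeHom huv hnadj)
    (contractNonEdgeProj_surjective huv) ?_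
  change (G.induce (contractNonEdgeProj huv ⁻¹' T)ᶜ).Connected
  by_cases hz : ⟨u, huv⟩ ∈ T
  · obtain ⟨t, rfl⟩ := exists_eq_pair_of_mem_of_ncard_lt_three hz hT
    rw [contractNonEdgeProj_preimage_pair]
    exact h t.1
  · refine hG.2 _ ?_
    rwa [contractNonEdgeProj_preimage_of_notMem huv hz,
      ncard_image_of_injective _ Subtype.val_injective]

end Contraction

section Fan

variable {G : SimpleGraph V} {S C₁ D : Set V} {c₁ x c : V}

theorem connected_induce_compl_of_notMem_fan (hG : KConnected 3 G) (hS : S.ncard = 3)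
    (hcover : ∀ y ∉ S, ∃ C, IsCompOf G S C ∧ y ∈ C) (h₁ : IsCompOf G S C₁)
    (F : Fan3 G (C₁ ∪ S) c₁ S) (hx : x ∈ C₁) (hxF : x ∉ F.verts) (hc : c ∉ C₁ ∪ S)
    (hD : IsCompOf G S D) (hxD : x ∉ D) (hcD : c ∉ D) (w : V) :
    (G.induce {x, c, w}ᶜ).Connected := by
  have := hG.finite
  set T : Set V := {x, c, w}
  have hxS : x ∉ S := h₁.2.1 hx
  have hST : S \ {w} ⊆ Tᶜ := by
    rintro s ⟨hs, hsw⟩ (rfl | rfl | rfl)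
    exacts [hxS hs, hc (Or.inr hs), hsw rfl]
  obtain ⟨s₀, hs₀, hs₀w⟩ : ∃ s ∈ S, s ∉ ({w} : Set V) :=
    exists_mem_notMem_of_ncard_lt_ncard (by rw [ncard_singleton, hS]; norm_num)
  obtain ⟨R, hRT, hSR, hR⟩ : ∃ R ⊆ Tᶜ, S \ {w} ⊆ R ∧ (G.induce R).Preconnected := by
    by_cases hwD : w ∈ D
    · refine ⟨F.verts, fun v hv hvT => ?_, sdiff_subset.trans F.subset_verts,
        F.connected_induce_verts.preconnected⟩
      have hvA := F.verts_subset hv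
      rcases hvT with rfl | rfl | rfl
      · exact hxF hv
      · exact hc hvA
      · exact hD.notMem_union_of_ne h₁ (fun h => hxD (h ▸ hx)) hwD hvA
    · refine ⟨D ∪ S \ {w}, union_subset ?_ hST, subset_union_right,
        (hD.connected_induce_union hG hS.le sdiff_subset).preconnected⟩
      rintro v hv (rfl | rfl | rfl)
      exacts [hxD hv, hcD hv, hwD hv]
  refine (connected_iff _).2 ⟨preconnected_induce_of_forall_reachable hRT hR fun y hy => ?_,
    ⟨⟨s₀, hST ⟨hs₀, hs₀w⟩⟩⟩⟩
  obtain ⟨b, hbS, hbT, hyb⟩ :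
      ∃ b ∈ S, ∃ hb : b ∈ Tᶜ, (G.induce Tᶜ).Reachable ⟨y, hy⟩ ⟨b, hb⟩ := by
    by_cases hyS : y ∈ S
    · exact ⟨y, hyS, hy, .rfl⟩
    obtain ⟨C, hC, hyC⟩ := hcover y hyS
    exact hC.exists_reachable_of_kConnected hG (hC.ncard_inter_union_lt_three h₁ hx hc w) hs₀
      (hST ⟨hs₀, hs₀w⟩) hyC hy
  exact ⟨b, hSR ⟨hbS, fun h => hbT (Or.inr (Or.inr h))⟩, hyb⟩

theorem isContractibleNonEdge_of_notMem_fan (hG : KConnected 3 G) (hS : S.ncard = 3)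
    (hcover : ∀ y ∉ S, ∃ C, IsCompOf G S C ∧ y ∈ C) (h₁ : IsCompOf G S C₁)
    (F : Fan3 G (C₁ ∪ S) c₁ S) (hx : x ∈ C₁) (hxF : x ∉ F.verts) (hc : c ∉ C₁ ∪ S)
    (hD : IsCompOf G S D) (hxD : x ∉ D) (hcD : c ∉ D) : IsContractibleNonEdge G x c := by
  have := hG.finite
  have hxc : x ≠ c := fun h => hc (Or.inl (h ▸ hx))
  have hnadj : ¬ G.Adj x c := fun h => hc (Or.inl (h₁.2.2.2 x hx c (fun hcS => hc (Or.inr hcS)) h))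
  have hcard : 5 ≤ Nat.card V := by
    have h5 : (insert x (insert c S)).ncard = 5 := by
      rw [ncard_insert_of_notMem, ncard_insert_of_notMem, hS]
      · exact fun h => hc (Or.inr h)
      · rintro (h | h)
        exacts [hxc h, h₁.2.1 hx h]
    exact h5 ▸ ncard_le_card _
  exact ⟨hxc, hnadj, kConnected_contractNonEdge hG hxc hnadj hcard
    (connected_induce_compl_of_notMem_fan hG hS hcover h₁ F hx hxF hc hD hxD hcD)⟩

end Fan

theorem stmt3_general {V : Type*} (G : SimpleGraph V) (hG : KConnected 3 G)
    (S : Set V) (hS3 : S.ncard = 3)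
    (C1 C2 C3 : Set V)
    (h1 : IsCompOf G S C1) (h2 : IsCompOf G S C2) (h3 : IsCompOf G S C3)
    (h12 : C1 ≠ C2) (h13 : C1 ≠ C3) (h23 : C2 ≠ C3)
    (hcover : C1 ∪ C2 ∪ C3 = Sᶜ)
    (c1 : V) (F1 : Fan3 G (C1 ∪ S) c1 S)
    (hrem : ((C1 ∪ S) \ F1.verts).Nonempty) :
    2 ≤ (contractibleNonEdges G).ncard := by
  have := hG.finite
  obtain ⟨x, hxA, hxF⟩ := hrem
  have hx : x ∈ C1 := hxA.resolve_right fun hxS => hxF (F1.subset_verts hxS)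
  have hcover' : ∀ y ∉ S, ∃ C, IsCompOf G S C ∧ y ∈ C := by
    intro y hy
    rcases (hcover ▸ hy : y ∈ C1 ∪ C2 ∪ C3) with (hy | hy) | hy
    exacts [⟨C1, h1, hy⟩, ⟨C2, h2, hy⟩, ⟨C3, h3, hy⟩]
  obtain ⟨c2, hc2⟩ := h2.1
  obtain ⟨c3, hc3⟩ := h3.1
  have hc2' := h2.notMem_union_of_ne h1 h12.symm hc2
  have hc3' := h3.notMem_union_of_ne h1 h13.symm hc3
  have e2 := isContractibleNonEdge_of_notMem_fan hG hS3 hcover' h1 F1 hx hxF hc2' h3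
    (h1.notMem_of_ne h3 h13 hx) (h2.notMem_of_ne h3 h23 hc2)
  have e3 := isContractibleNonEdge_of_notMem_fan hG hS3 hcover' h1 F1 hx hxF hc3' h2
    (h1.notMem_of_ne h2 h12 hx) (h3.notMem_of_ne h2 h23.symm hc3)
  have hne : s(x, c2) ≠ s(x, c3) := by
    rw [Ne, Sym2.eq_iff]
    rintro (⟨-, rfl⟩ | ⟨rfl, -⟩)
    · exact h2.notMem_of_ne h3 h23 hc2 hc3
    · exact hc3' (Or.inl hx)
  exact (one_lt_ncard_iff (toFinite _)).2 ⟨_, _, ⟨x, c2, rfl, e2⟩, ⟨x, c3, rfl, e3⟩, hne⟩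

/-- Let `G` be a finite 3-connected graph and `S` a 3-cut of `G` such that `G − S`
consists of exactly three components `C₁, C₂, C₃`. Let `F₁` be a `c₁`–`S` fan in
`G[V(C₁) ∪ S]` with `c₁ ∈ C₁`. If `(V(C₁) ∪ S) − V(F₁) ≠ ∅`, then `G` contains at
least two contractible non-edges. -/
theorem stmt3 {V : Type*} [Fintype V] (G : SimpleGraph V) (hG : KConnected 3 G)
    (S : Set V) (hS3 : S.ncard = 3) (hScut : IsCutSet G S)
    (C1 C2 C3 : Set V)
    (h1 : IsCompOf G S C1) (h2 : IsCompOf G S C2) (h3 : IsCompOf G S C3)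
    (h12 : C1 ≠ C2) (h13 : C1 ≠ C3) (h23 : C2 ≠ C3)
    (hcover : C1 ∪ C2 ∪ C3 = Sᶜ)
    (c1 : V) (hc1 : c1 ∈ C1) (F1 : Fan3 G (C1 ∪ S) c1 S)
    (hrem : ((C1 ∪ S) \ F1.verts).Nonempty) :
    2 ≤ (contractibleNonEdges G).ncard :=
  stmt3_general G hG S hS3 C1 C2 C3 h1 h2 h3 h12 h13 h23 hcover c1 F1 hrem
end

section
/- Let G be a finite non-complete connected simple graph, let T and T′ be smallest cuts of G, let F be a T-fragment of G and let F′ be a T′-fragment of G. If F ∩ F′ ≠ ∅, then |F ∩ T′| ≥ |F̄′ ∩ T|, where F̄′ = V(G) − (F′ ∪ T′). -/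
open SimpleGraph

variable {V : Type*}

/-- `T` is a smallest cut of `G`: a cut whose size equals the vertex connectivity,
i.e. a cut of minimum cardinality. -/
def IsSmallestCut (G : SimpleGraph V) (T : Set V) : Prop :=
  IsCutSet G T ∧ ∀ T' : Set V, IsCutSet G T' → T.ncard ≤ T'.ncard

/-- `F` is a `T`-fragment of `G`: the union of the vertex sets of at least one,
but not all, of the components of `G − T`. -/
def IsFragment (G : SimpleGraph V) (T : Set V) (F : Set V) : Prop :=
  ∃ Cs : Set (Set V), Cs.Nonempty ∧ (∀ C ∈ Cs, IsCompOf G T C) ∧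
    (∃ C, IsCompOf G T C ∧ C ∉ Cs) ∧ F = ⋃₀ Cs

/-!
The set `Y = (T ∩ (F' ∪ T')) ∪ (F ∩ T')` separates `F ∩ F'` from `V − (F ∪ T)`: a neighbour of a
vertex of `F ∩ F'` outside `T'` lies in `F'`, hence outside `T` lies in `F`. So `Y` is a cut, and
`|T| ≤ |Y|` becomes `|T \ (F' ∪ T')| ≤ |F ∩ T'|` after cancelling `|T ∩ (F' ∪ T')|`.
-/

namespace SimpleGraph

lemma Walk.mem_of_adj_closed {W : Type*} {H : SimpleGraph W} {A : Set W}
    (hA : ∀ x ∈ A, ∀ y, H.Adj x y → y ∈ A) :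
    ∀ {u v : W}, H.Walk u v → u ∈ A → v ∈ A
  | _, _, .nil, hu => hu
  | _, _, .cons h p, hu => mem_of_adj_closed hA p (hA _ hu _ h)

end SimpleGraph

variable {G : SimpleGraph V}

lemma isCutSet_of_adj_closed {S A : Set V} (hA : ∀ x ∈ A, ∀ y, y ∉ S → G.Adj x y → y ∈ A)
    {a b : V} (ha : a ∈ A) (haS : a ∉ S) (hb : b ∉ A) (hbS : b ∉ S) : IsCutSet G S := by
  intro hpre
  obtain ⟨w⟩ := hpre ⟨a, haS⟩ ⟨b, hbS⟩
  refine hb (Walk.mem_of_adj_closed (A := {z : (Sᶜ : Set V) | z.1 ∈ A}) ?_ w ha)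
  rintro x hx y hxy
  exact hA x hx y y.2 hxy

lemma IsCompOf.subset_of_mem_s4 {S C D : Set V} (hC : IsCompOf G S C) (hD : IsCompOf G S D)
    {x : V} (hxC : x ∈ C) (hxD : x ∈ D) : C ⊆ D := by
  intro y hy
  obtain ⟨w⟩ := hC.2.2.1.preconnected ⟨x, hxC⟩ ⟨y, hy⟩
  refine Walk.mem_of_adj_closed (A := {z : C | z.1 ∈ D}) ?_ w hxD
  rintro a ha b hab
  exact hD.2.2.2 a ha b (hC.2.1 b.2) hab

namespace IsFragment

variable {T F : Set V}

lemma subset_compl (hF : IsFragment G T F) : F ⊆ Tᶜ := by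
  obtain ⟨Cs, -, hcomp, -, rfl⟩ := hF
  exact Set.sUnion_subset fun C hC => (hcomp C hC).2.1

lemma mem_of_adj (hF : IsFragment G T F) {x y : V} (hx : x ∈ F) (hy : y ∉ T)
    (hxy : G.Adj x y) : y ∈ F := by
  obtain ⟨Cs, -, hcomp, -, rfl⟩ := hF
  obtain ⟨C, hC, hxC⟩ := hx
  exact ⟨C, hC, (hcomp C hC).2.2.2 x hxC y hy hxy⟩

lemma compl_union_nonempty (hF : IsFragment G T F) : (F ∪ T)ᶜ.Nonempty := by
  obtain ⟨Cs, -, hcomp, ⟨C₀, hC₀, hC₀Cs⟩, rfl⟩ := hF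
  obtain ⟨b, hb⟩ := hC₀.1
  refine ⟨b, ?_⟩
  rintro (⟨C, hC, hbC⟩ | hbT)
  · have hC₀C : C₀ = C :=
      (hC₀.subset_of_mem_s4 (hcomp C hC) hb hbC).antisymm ((hcomp C hC).subset_of_mem_s4 hC₀ hbC hb)
    exact hC₀Cs (hC₀C ▸ hC)
  · exact hC₀.2.1 hb hbT

lemma isCutSet_inter_union {T' F' : Set V} (hF : IsFragment G T F) (hF' : IsFragment G T' F')
    (hmeet : (F ∩ F').Nonempty) : IsCutSet G ((T ∩ (F' ∪ T')) ∪ (F ∩ T')) := by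
  obtain ⟨a, haF, haF'⟩ := hmeet
  obtain ⟨b, hb⟩ := hF.compl_union_nonempty
  refine isCutSet_of_adj_closed (A := F ∩ F') ?_ ⟨haF, haF'⟩ ?_ (fun h => hb (Or.inl h.1)) ?_
  · rintro x ⟨hxF, hxF'⟩ y hyY hxy
    have hyT' : y ∉ T' := fun hyT' =>
      hyY (Or.inr ⟨hF.mem_of_adj hxF (fun hyT => hyY (Or.inl ⟨hyT, Or.inr hyT'⟩)) hxy, hyT'⟩)
    have hyF' : y ∈ F' := hF'.mem_of_adj hxF' hyT' hxy
    exact ⟨hF.mem_of_adj hxF (fun hyT => hyY (Or.inl ⟨hyT, Or.inl hyF'⟩)) hxy, hyF'⟩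
  · rintro (⟨haT, -⟩ | ⟨-, haT'⟩)
    exacts [hF.subset_compl haF haT, hF'.subset_compl haF' haT']
  · rintro (⟨hbT, -⟩ | ⟨hbF, -⟩)
    exacts [hb (Or.inr hbT), hb (Or.inl hbF)]

end IsFragment

lemma ncard_diff_le_of_ncard_le_ncard_union [Finite V] {T F T' F' : Set V}
    (hFT : Disjoint F T)
    (hcard : T.ncard ≤ ((T ∩ (F' ∪ T')) ∪ (F ∩ T')).ncard) :
    (T \ (F' ∪ T')).ncard ≤ (F ∩ T').ncard := by
  have hT : (T ∩ (F' ∪ T')).ncard + (T \ (F' ∪ T')).ncard = T.ncard :=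
    Set.ncard_inter_add_ncard_sdiff_eq_ncard T (F' ∪ T')
  have hY : ((T ∩ (F' ∪ T')) ∪ (F ∩ T')).ncard = (T ∩ (F' ∪ T')).ncard + (F ∩ T').ncard :=
    Set.ncard_union_eq (hFT.symm.mono Set.inter_subset_left Set.inter_subset_left)
  omega

theorem stmt4_general {V : Type*} [Fintype V] (G : SimpleGraph V)
    (T T' : Set V) (hT : IsSmallestCut G T)
    (F F' : Set V) (hF : IsFragment G T F) (hF' : IsFragment G T' F')
    (hmeet : (F ∩ F').Nonempty) :
    ((Set.univ \ (F' ∪ T')) ∩ T).ncard ≤ (F ∩ T').ncard := by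
  have hcut := hF.isCutSet_inter_union hF' hmeet
  have hFT : Disjoint F T := Set.disjoint_left.mpr fun _ hx => hF.subset_compl hx
  rw [← Set.compl_eq_univ_sdiff, Set.inter_comm, ← Set.sdiff_eq]
  exact ncard_diff_le_of_ncard_le_ncard_union hFT (hT.2 _ hcut)

/-- Let `G` be a finite non-complete connected graph, `T, T′` smallest cuts of `G`,
`F` a `T`-fragment and `F′` a `T′`-fragment. If `F ∩ F′ ≠ ∅`, then
`|F ∩ T′| ≥ |F̄′ ∩ T|`, where `F̄′ = V(G) − (F′ ∪ T′)`. -/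
theorem stmt4 {V : Type*} [Fintype V] (G : SimpleGraph V) (hconn : G.Connected)
    (hnc : ∃ u v : V, u ≠ v ∧ ¬ G.Adj u v)
    (T T' : Set V) (hT : IsSmallestCut G T) (hT' : IsSmallestCut G T')
    (F F' : Set V) (hF : IsFragment G T F) (hF' : IsFragment G T' F')
    (hmeet : (F ∩ F').Nonempty) :
    ((Set.univ \ (F' ∪ T')) ∩ T).ncard ≤ (F ∩ T').ncard :=
  stmt4_general G T T' hT F F' hF hF' hmeet
end

section
/- Let G be a finite 3-connected simple graph and let {u, v} be a non-edge of G. Then {u, v} is contractible if and only if there is no 3-cut of G containing both u and v. -/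
/-!
Identify the merged vertex of `G / uv` with `u` and delete a set `S'` of fewer than `k` vertices
from `G / uv`. If `S'` contains the merged vertex, `G / uv - S'` is isomorphic to
`G - (S' ∪ {v})`, a deletion of at most `k` vertices including `u` and `v`; so it is connected
unless `S' ∪ {v}` is a `k`-cut through `u` and `v`, and every such cut arises this way.
Otherwise sending `v` to `u` is a surjective homomorphism from `G - S'` onto `G / uv - S'`, which
is therefore connected. Finally `G / uv` has enough vertices because `u` has at least `k`
neighbours, none of them `u` or `v`.
-/

open SimpleGraph

variable {V : Type*}

section ContractNonEdge

variable {G : SimpleGraph V} {k : ℕ} {u v : V}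

lemma KConnected.le_ncard_neighborSet (hG : KConnected k G) (huv : u ≠ v) (hadj : ¬ G.Adj u v) :
    k ≤ (G.neighborSet u).ncard := by
  by_contra! hlt
  have hu : u ∉ G.neighborSet u := G.irrefl
  have hv : v ∉ G.neighborSet u := hadj
  obtain ⟨p⟩ := (hG.2 _ hlt).preconnected ⟨u, hu⟩ ⟨v, hv⟩
  have hp : ¬ p.Nil := Walk.not_nil_of_ne fun h => huv (congrArg Subtype.val h)
  exact (p.getVert 1).2 (p.adj_snd hp)

lemma KConnected.add_two_le_card [Finite V] (hG : KConnected k G) (huv : u ≠ v)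
    (hadj : ¬ G.Adj u v) : k + 2 ≤ Nat.card V := by
  have hu : u ∉ insert v (G.neighborSet u) := by
    rintro (h | h)
    exacts [huv h, G.irrefl h]
  have hv : v ∉ G.neighborSet u := hadj
  calc k + 2 ≤ (G.neighborSet u).ncard + 2 := by grw [hG.le_ncard_neighborSet huv hadj]
    _ = (insert u (insert v (G.neighborSet u))).ncard := by
      rw [Set.ncard_insert_of_notMem hu, Set.ncard_insert_of_notMem hv]
    _ ≤ Nat.card V := Set.ncard_le_card _

lemma card_subtype_ne_add_one [Finite V] (v : V) : Nat.card {w // w ≠ v} + 1 = Nat.card V := by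
  rw [← Set.ncard_compl_add_ncard {v}, Set.ncard_singleton, ← Nat.card_coe_set_eq]
  rfl

lemma ncard_insert_image_val [Finite V] (S' : Set {w // w ≠ v}) :
    (insert v (Subtype.val '' S')).ncard = S'.ncard + 1 := by
  have hv : v ∉ Subtype.val '' S' := by
    rintro ⟨w, -, hw⟩
    exact w.2 hw
  rw [Set.ncard_insert_of_notMem hv, Set.ncard_image_of_injective _ Subtype.val_injective]

def contractNonEdgeInduceIso (huv : u ≠ v) {S' : Set {w // w ≠ v}} (hu : ⟨u, huv⟩ ∈ S') :
    G.induce (insert v (Subtype.val '' S'))ᶜ ≃g (contractNonEdge G u v).induce S'ᶜ where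
  toFun x := ⟨⟨x.1, fun h => x.2 (.inl h)⟩, fun h => x.2 (.inr ⟨_, h, rfl⟩)⟩
  invFun y := ⟨y.1.1, by
    rintro (h | ⟨w, hw, h⟩)
    · exact y.1.2 h
    · exact y.2 (Subtype.ext h ▸ hw)⟩
  left_inv _ := rfl
  right_inv _ := rfl
  map_rel_iff' := by
    rintro ⟨a, ha⟩ ⟨b, hb⟩
    have hu' : u ∈ insert v (Subtype.val '' S') := .inr ⟨_, hu, rfl⟩
    simp only [comap_adj, Function.Embedding.coe_subtype, contractNonEdge, Equiv.coe_fn_mk]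
    constructor
    · rintro ⟨-, h | ⟨rfl, -⟩ | ⟨rfl, -⟩⟩
      exacts [h, absurd hu' ha, absurd hu' hb]
    · exact fun h => ⟨fun he => h.ne (congrArg Subtype.val he), .inl h⟩

lemma connected_induce_contractNonEdge_of_notMem (hadj : ¬ G.Adj u v) {huv : u ≠ v}
    {S' : Set {w // w ≠ v}} (hu : ⟨u, huv⟩ ∉ S')
    (hG : (G.induce (Subtype.val '' S')ᶜ).Connected) :
    ((contractNonEdge G u v).induce S'ᶜ).Connected := by
  classical
  let f : G.induce (Subtype.val '' S')ᶜ →g (contractNonEdge G u v).induce S'ᶜ :=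
    { toFun x := if h : x.1 = v then ⟨⟨u, huv⟩, hu⟩ else ⟨⟨x.1, h⟩, fun hs => x.2 ⟨_, hs, rfl⟩⟩
      map_rel' := by
        rintro ⟨a, _⟩ ⟨b, _⟩ hab
        simp only [comap_adj, Function.Embedding.coe_subtype, contractNonEdge] at hab ⊢
        by_cases ha : a = v <;> by_cases hb : b = v
        · exact absurd (ha.trans hb.symm) hab.ne
        · subst ha
          rw [dif_pos rfl, dif_neg hb]
          exact ⟨fun he => hadj (by rw [show u = b from congrArg Subtype.val he]; exact hab.symm),
            .inr (.inl ⟨rfl, hab⟩)⟩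
        · subst hb
          rw [dif_neg ha, dif_pos rfl]
          exact ⟨fun he => hadj (by rw [show u = a from (congrArg Subtype.val he).symm]; exact hab),
            .inr (.inr ⟨rfl, hab⟩)⟩
        · rw [dif_neg ha, dif_neg hb]
          exact ⟨fun he => hab.ne (congrArg Subtype.val he), .inl hab⟩ }
  refine hG.map f ?_
  rintro ⟨⟨w, hw⟩, hwS⟩
  refine ⟨⟨w, fun ⟨w', hw', h⟩ => hwS ?_⟩, dif_neg hw⟩
  rwa [show w' = ⟨w, hw⟩ from Subtype.ext h] at hw'

lemma not_isCutSet_of_kConnected_contractNonEdge [Finite V] (huv : u ≠ v)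
    (hK : KConnected k (contractNonEdge G u v)) {S : Set V} (hS : S.ncard = k) (hu : u ∈ S)
    (hv : v ∈ S) : ¬ IsCutSet G S := by
  set S' : Set {w // w ≠ v} := Subtype.val ⁻¹' S
  have hS' : insert v (Subtype.val '' S') = S := by
    ext w
    constructor
    · rintro (rfl | ⟨w', hw', rfl⟩)
      exacts [hv, hw']
    · intro hw
      by_cases h : w = v
      exacts [.inl h, .inr ⟨⟨w, h⟩, hw, rfl⟩]
  have hconn := (contractNonEdgeInduceIso huv (S' := S') hu).connected_iff.mpr
    (hK.2 S' (by have := ncard_insert_image_val S'; rw [hS'] at this; omega))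
  rw [hS'] at hconn
  exact fun hcut => hcut hconn.preconnected

lemma kConnected_contractNonEdge_s9 [Finite V] (hG : KConnected k G) (huv : u ≠ v)
    (hadj : ¬ G.Adj u v)
    (hcut : ∀ S : Set V, S.ncard = k → u ∈ S → v ∈ S → ¬ IsCutSet G S) :
    KConnected k (contractNonEdge G u v) := by
  have hcard := hG.add_two_le_card huv hadj
  refine ⟨by have := card_subtype_ne_add_one v; omega, fun S' hS' => ?_⟩
  by_cases hu : ⟨u, huv⟩ ∈ S'
  · refine (contractNonEdgeInduceIso huv hu).connected_iff.mp ?_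
    set S := insert v (Subtype.val '' S')
    have hS : S.ncard = S'.ncard + 1 := ncard_insert_image_val S'
    obtain hlt | hk : S.ncard < k ∨ S.ncard = k := by omega
    · exact hG.2 S hlt
    · have hne : Sᶜ.Nonempty := by
        rw [Set.nonempty_compl]
        rintro hS_univ
        rw [hS_univ, Set.ncard_univ] at hk
        omega
      exact (connected_iff _).mpr
        ⟨not_not.mp (hcut S hk (.inr ⟨_, hu, rfl⟩) (.inl rfl)), hne.to_subtype⟩
  · exact connected_induce_contractNonEdge_of_notMem hadj hu
      (hG.2 _ (by rwa [Set.ncard_image_of_injective _ Subtype.val_injective]))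

end ContractNonEdge

/-- Let `G` be a finite 3-connected graph and `{u, v}` a non-edge of `G`. Then
`{u, v}` is contractible if and only if no 3-cut of `G` contains both `u` and `v`. -/
theorem stmt9 {V : Type*} [Fintype V] (G : SimpleGraph V) (hG : KConnected 3 G)
    (u v : V) (huv : u ≠ v) (hadj : ¬ G.Adj u v) :
    IsContractibleNonEdge G u v ↔
      ¬ ∃ S : Set V, IsCutSet G S ∧ S.ncard = 3 ∧ u ∈ S ∧ v ∈ S := by
  constructor
  · rintro ⟨-, -, hK⟩ ⟨S, hcut, hS, hu, hv⟩
    exact not_isCutSet_of_kConnected_contractNonEdge huv hK hS hu hv hcut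
  · intro h
    exact ⟨huv, hadj, kConnected_contractNonEdge_s9 hG huv hadj
      fun S hS hu hv hcut => h ⟨S, hcut, hS, hu, hv⟩⟩
end
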